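/- arXiv:1909.05798 — 4 statements merged into one kernel-verified Lean document; each statement's English description precedes it below -/
import Mathlib

section
/- Let W and V be real vector spaces. Set P := (W × V*) × (W* × V), the local model of T*(A*) for the trivial bundle A = W × V, with the symplectic-type alternating form ω*(u, u') := χ'(m) + ψ(Y') − χ(m') − ψ'(Y) for u = (m, ψ, χ, Y), u' = (m', ψ', χ', Y'); and set P' := (W × V) × (W* × V*), the local model of T*(A), with the form ω((m, X, ω₁, φ), (m', X', ω₁', φ')) := ω₁'(m) + φ'(X) − ω₁(m') − φ(X'). Then the map R : P → P', (m, ψ, χ, Y) ↦ (m, Y, −χ, ψ), is a linear bijection satisfying ω(R u, R u') = −ω*(u, u') for all u, u' ∈ P. (This is the statement, in the local model, that the Mackenzie–Xu map T*(A*) → T*(A) is an antisymplectomorphism of the canonical cotangent symplectic structures.) -/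
/-- Local model of the statement that the Mackenzie–Xu map `R : T*(A*) → T*(A)` is an
antisymplectomorphism.  Here `P = W × V* × W* × V` models `T*(A*)` with form `ω*` and
`P' = W × V × W* × V*` models `T*(A)` with form `ω`; the map
`R : (m, ψ, χ, Y) ↦ (m, Y, -χ, ψ)` is a linear bijection with
`ω (R u) (R u') = - ω* u u'`. -/
theorem stmt_2 (W V : Type*) [AddCommGroup W] [Module ℝ W]
    [AddCommGroup V] [Module ℝ V]
    (ωstar : (W × Module.Dual ℝ V × Module.Dual ℝ W × V) →
             (W × Module.Dual ℝ V × Module.Dual ℝ W × V) → ℝ)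
    (hωstar : ωstar = fun u u' =>
      u'.2.2.1 u.1 + u.2.1 u'.2.2.2 - u.2.2.1 u'.1 - u'.2.1 u.2.2.2)
    (ω : (W × V × Module.Dual ℝ W × Module.Dual ℝ V) →
         (W × V × Module.Dual ℝ W × Module.Dual ℝ V) → ℝ)
    (hω : ω = fun w w' =>
      w'.2.2.1 w.1 + w'.2.2.2 w.2.1 - w.2.2.1 w'.1 - w.2.2.2 w'.2.1)
    (R : (W × Module.Dual ℝ V × Module.Dual ℝ W × V) →
         (W × V × Module.Dual ℝ W × Module.Dual ℝ V))
    (hR : R = fun u => (u.1, u.2.2.2, -u.2.2.1, u.2.1)) :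
    IsLinearMap ℝ R ∧ Function.Bijective R ∧
    ∀ u u', ω (R u) (R u') = - ωstar u u' := by
  subst hR hω hωstar
  refine ⟨⟨fun a b => by simp [Prod.ext_iff, neg_add, add_comm], fun c a => by
    simp [Prod.ext_iff, Prod.smul_def, smul_neg]⟩, ?_, ?_⟩
  · constructor
    · rintro ⟨a1,a2,a3,a4⟩ ⟨b1,b2,b3,b4⟩ h
      simp only [Prod.mk.injEq] at h
      obtain ⟨h1, h2, h3, h4⟩ := h
      exact Prod.ext h1 (Prod.ext h4 (Prod.ext (neg_injective h3) h2))
    · intro ⟨m, X, χ, φ⟩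
      exact ⟨(m, φ, -χ, X), by simp⟩
  · intro u u'
    simp
    ring
end

section
/- Let A, B, C be real vector spaces. Fix (γ₁, β₁, a₁) ∈ C* × B* × A. Then a triple (a₂, β₂, γ₂) ∈ A × B* × C* satisfies the identity (β₁(b) + α(a₁)) + (β₂(b) + γ₂(c)) = γ₁(c) + α(a₂) for all (α, c, b) ∈ A* × C × B if and only if (a₂, β₂, γ₂) = (a₁, −β₁, γ₁). Consequently the map r : C* × B* × A → A × B* × C*, (γ, β, a) ↦ (a, −β, γ), is a linear bijection which acts as −id on the middle (B*) component and as the identity on the A and C* components. (This is the decomposed form of the theorem that for a double vector bundle D the three-term identity ⟨𝔅, Ψ⟩_{C*} + ⟨Φ, d⟩_A = ⟨Ψ, d⟩_B defines an isomorphism of double vector bundles R_{D,A} : D⊛B⊛C* → D⊛A preserving A and C* and inducing −id on the cores B*.) -/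
/-- Decomposed form of Theorem 3.2 (the map `R_{D,A} : D ⊛ B ⊛ C* → D ⊛ A`):
given `(γ₁, β₁, a₁) ∈ C* × B* × A`, a triple `(a₂, β₂, γ₂) ∈ A × B* × C*`
satisfies the three-term identity for all `(α, c, b)` iff it equals
`(a₁, -β₁, γ₁)`; consequently `r : (γ, β, a) ↦ (a, -β, γ)` is a linear bijection
acting as `-id` on the `B*` component and as the identity on `A` and `C*`. -/
theorem stmt_4 (A B C : Type*) [AddCommGroup A] [Module ℝ A]
    [AddCommGroup B] [Module ℝ B] [AddCommGroup C] [Module ℝ C] :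
    (∀ (γ₁ : Module.Dual ℝ C) (β₁ : Module.Dual ℝ B) (a₁ : A)
       (a₂ : A) (β₂ : Module.Dual ℝ B) (γ₂ : Module.Dual ℝ C),
      (∀ (α : Module.Dual ℝ A) (c : C) (b : B),
          (β₁ b + α a₁) + (β₂ b + γ₂ c) = γ₁ c + α a₂) ↔
        (a₂, β₂, γ₂) = (a₁, -β₁, γ₁)) ∧
    IsLinearMap ℝ
      (fun p : Module.Dual ℝ C × Module.Dual ℝ B × A =>
        ((p.2.2, -p.2.1, p.1) : A × Module.Dual ℝ B × Module.Dual ℝ C)) ∧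
    Function.Bijective
      (fun p : Module.Dual ℝ C × Module.Dual ℝ B × A =>
        ((p.2.2, -p.2.1, p.1) : A × Module.Dual ℝ B × Module.Dual ℝ C)) := by
  refine ⟨?_, ⟨fun p q => by simp [Prod.ext_iff, neg_add, add_comm], fun c p => by
      simp [Prod.ext_iff, smul_neg]⟩, ?_⟩
  · intro γ₁ β₁ a₁ a₂ β₂ γ₂
    constructor
    · intro h
      have hβ : β₂ = -β₁ := by
        ext b
        have := h 0 0 b
        simp at this
        simp [LinearMap.neg_apply]
        linarith
      have hγ : γ₂ = γ₁ := by
        ext c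
        have := h 0 c 0
        simpa using this
      have ha : a₂ = a₁ := by
        have : ∀ α : Module.Dual ℝ A, α (a₂ - a₁) = 0 := by
          intro α
          have := h α 0 0
          simp at this
          simp [map_sub]
          linarith
        have := (Module.forall_dual_apply_eq_zero_iff ℝ (a₂ - a₁)).mp this
        exact sub_eq_zero.mp this
      simp [hβ, hγ, ha]
    · rintro h
      obtain ⟨h1, h2, h3⟩ := Prod.mk.injEq .. ▸ h
      intro α c b
      simp_all [Prod.ext_iff]
      ring
  · constructor
    · rintro ⟨γ, β, a⟩ ⟨γ', β', a'⟩ h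
      simp [Prod.ext_iff] at h ⊢
      obtain ⟨h1, h2, h3⟩ := h
      exact ⟨h3, h2, h1⟩
    · rintro ⟨a, β, γ⟩
      exact ⟨⟨γ, -β, a⟩, by simp⟩
end

section
/- Let A, B, C be real vector spaces. Fix X ∈ A, Y ∈ B and linear maps λ : B → C, ρ : A → C (these are the data, at a single point of the base, of a grid on the decomposed double vector bundle D = A × B × C, with linear sections ξ(b) = (X, b, λ(b)) over X and η(a) = (a, Y, ρ(a)) over Y; the warp of the grid is w := λ(Y) − ρ(X) ∈ C). For κ ∈ C*: (i) the unique element u = (κ, β, a) ∈ C* × B* × A satisfying ⟨u, (κ, α, b)⟩_{C*} = α(X) + κ(λ(b)) for all (α, b) ∈ A* × B is u = (κ, κ∘λ, X) (the squarecap section value ξ^⊓(κ)); (ii) the unique element v = (κ, σ, b) ∈ C* × A* × B satisfying ⟨v, (a, β, κ)⟩'_{C*} = β(Y) + κ(ρ(a)) for all (a, β) ∈ A × B* is v = (κ, κ∘ρ, Y) (the squarecap section value η^⊓(κ)); and (iii) with r(κ, β, a) := (a, −β, κ), one has ⟨v, r(u)⟩'_{C*} = −κ(λ(Y) − ρ(X))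 = −κ(w). That is, the pairing of the squarecap sections of a grid equals minus the linear function of the warp: ⦅ξ^⊓, η^⊓⦆ = ℓ_{−warp(ξ,η)}. -/
/-- Pointwise decomposed form of Theorem 5.2 (`⦅ξ^⊓, η^⊓⦆ = ℓ_{−warp(ξ,η)}`):
for a grid on `D = A × B × C` given by `X ∈ A`, `Y ∈ B` and linear maps
`l : B → C`, `ρ : A → C` (so the warp is `w = l Y − ρ X`), and `κ ∈ C*`:
(i) the squarecap value `ξ^⊓(κ)` is `(κ, κ∘l, X)`;
(ii) the squarecap value `η^⊓(κ)` is `(κ, κ∘ρ, Y)`;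
(iii) their pairing is `−κ(l Y − ρ X) = −κ(w)`. -/
theorem stmt_7 (A B C : Type*) [AddCommGroup A] [Module ℝ A]
    [AddCommGroup B] [Module ℝ B] [AddCommGroup C] [Module ℝ C]
    (X : A) (Y : B) (l : B →ₗ[ℝ] C) (ρ : A →ₗ[ℝ] C) (κ : Module.Dual ℝ C)
    (w : C) (hw : w = l Y - ρ X) :
    (∀ (β : Module.Dual ℝ B) (a : A),
      (∀ (α : Module.Dual ℝ A) (b : B), α a + β b = α X + κ (l b)) ↔
        (β = κ.comp l ∧ a = X)) ∧
    (∀ (σ : Module.Dual ℝ A) (b : B),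
      (∀ (a : A) (β : Module.Dual ℝ B), σ a + β b = β Y + κ (ρ a)) ↔
        (σ = κ.comp ρ ∧ b = Y)) ∧
    ((κ.comp ρ) X + (-(κ.comp l)) Y = -κ (l Y - ρ X) ∧
      -κ (l Y - ρ X) = -κ w) := by
  refine ⟨?_, ?_, ?_, by rw [hw]⟩
  · intro β a
    constructor
    · intro h
      constructor
      · ext b
        have := h 0 b
        simpa using this
      · have ha : ∀ α : Module.Dual ℝ A, α (a - X) = 0 := by
          intro α
          have := h α 0
          simp only [map_zero, add_zero] at this
          simp [map_sub, this]
        have := (Module.forall_dual_apply_eq_zero_iff ℝ (a - X)).mp ha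
        exact sub_eq_zero.mp this
    · rintro ⟨hβ, ha⟩ α b
      subst hβ ha
      simp
  · intro σ b
    constructor
    · intro h
      constructor
      · ext a
        have := h a 0
        simpa using this
      · have hb : ∀ β : Module.Dual ℝ B, β (b - Y) = 0 := by
          intro β
          have := h 0 β
          simp only [map_zero, zero_add] at this
          simp [map_sub, this]
        have := (Module.forall_dual_apply_eq_zero_iff ℝ (b - Y)).mp hb
        exact sub_eq_zero.mp this
    · rintro ⟨hσ, hb⟩ a β
      subst hσ hb
      simp [add_comm]
  · simp [map_sub]
    ring
end

section
/- Let W and V be real normed vector spaces with continuous duals W' and V'. On P := (W × V') × (W' × V) (the local model of T*(A*) for the trivial bundle A = W × V), define: the Liouville-type 1-form λ_{A*} at u = (m, ψ, χ, Y) by λ_{A*}(u)(δm, δψ, δχ, δY) := χ(δm) + δψ(Y); the pullback 1-form R*λ_A at u by (R*λ_A)(u)(δm, δψ, δχ, δY) := −χ(δm) + ψ(δY) (where R(m, ψ, χ, Y) = (m, Y, −χ, ψ) and λ_A at a point (m, X, ω₁, φ) of the model of T*(A) sends (δm, δX, δω₁, δφ) to ω₁(δm) + φ(δX)); and the function P̂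 : P → ℝ, P̂(m, ψ, χ, Y) := ψ(Y). Then P̂ is Fréchet differentiable and for every u ∈ P and every δ = (δm, δψ, δχ, δY): (R*λ_A)(u)(δ) + λ_{A*}(u)(δ) = DP̂(u)(δ). That is, R*λ_A + λ_{A*} = dP̂, the local form of the relation between the Liouville 1-forms under the Mackenzie–Xu map. -/
/-- Local form of the relation `R*λ_A + λ_{A*} = dP̂` between the Liouville
1-forms under the Mackenzie–Xu map.  On `P = W × V' × W' × V` (model of
`T*(A*)`), with `λ_{A*}(m,ψ,χ,Y)(δm,δψ,δχ,δY) = χ(δm) + δψ(Y)`,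
`(R*λ_A)(m,ψ,χ,Y)(δm,δψ,δχ,δY) = -χ(δm) + ψ(δY)` and `P̂(m,ψ,χ,Y) = ψ(Y)`,
the function `P̂` is Fréchet differentiable and
`(R*λ_A)(u)(δ) + λ_{A*}(u)(δ) = DP̂(u)(δ)` for all `u, δ`. -/
theorem stmt_9 (W V : Type*) [NormedAddCommGroup W] [NormedSpace ℝ W]
    [NormedAddCommGroup V] [NormedSpace ℝ V]
    (lamAstar RlamA :
      (W × StrongDual ℝ V × StrongDual ℝ W × V) →
      (W × StrongDual ℝ V × StrongDual ℝ W × V) → ℝ)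
    (hlam : lamAstar = fun u δ => u.2.2.1 δ.1 + δ.2.1 u.2.2.2)
    (hRlam : RlamA = fun u δ => -(u.2.2.1 δ.1) + u.2.1 δ.2.2.2)
    (Phat : (W × StrongDual ℝ V × StrongDual ℝ W × V) → ℝ)
    (hPhat : Phat = fun u => u.2.1 u.2.2.2) :
    Differentiable ℝ Phat ∧
    ∀ (u δ : W × StrongDual ℝ V × StrongDual ℝ W × V),
      RlamA u δ + lamAstar u δ = fderiv ℝ Phat u δ := by
  subst hPhat hlam hRlam
  have hB : IsBoundedBilinearMap ℝ
      (fun p : StrongDual ℝ V × V => p.1 p.2) :=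
    isBoundedBilinearMap_apply
  let L : (W × StrongDual ℝ V × StrongDual ℝ W × V) →L[ℝ] StrongDual ℝ V × V :=
    ((ContinuousLinearMap.fst ℝ (StrongDual ℝ V)
        (StrongDual ℝ W × V)).prod
      ((ContinuousLinearMap.snd ℝ (StrongDual ℝ W) V).comp
        (ContinuousLinearMap.snd ℝ (StrongDual ℝ V)
          (StrongDual ℝ W × V)))).comp
      (ContinuousLinearMap.snd ℝ W
        (StrongDual ℝ V × StrongDual ℝ W × V))
  have hderiv : ∀ u : W × StrongDual ℝ V × StrongDual ℝ W × V,
      HasFDerivAt (fun u : W × StrongDual ℝ V × StrongDual ℝ W × V =>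
        u.2.1 u.2.2.2) ((hB.deriv (L u)).comp L) u := by
    intro u
    have h1 := hB.hasFDerivAt (L u)
    have h2 : HasFDerivAt (fun x => L x) L u := L.hasFDerivAt
    exact h1.comp u h2
  constructor
  · exact fun u => (hderiv u).differentiableAt
  · intro u δ
    rw [(hderiv u).fderiv]
    simp [hB.deriv_apply, L]
    ring
end
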